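/- arXiv:1810.08235 — 2 statements merged into one kernel-verified Lean document; each statement's English description precedes it below -/
import Mathlib

section
/- For integers m, n, p, q ≥ 1, the convolution sequence (r_i)_{i≥1} is nonincreasing beyond index p+q+1+⌊(m+n)/2⌋; that is, r_{i+1} ≤ r_i for every i ≥ p+q+1+⌊(m+n)/2⌋. -/
/-- The sequence of `p` ones followed by the binomial coefficients
`choose m 0, …, choose m m` and then zeros (indexed from 1; the value at 0 is 0). -/
def broomSeq (m p : ℕ) : ℕ → ℕ := fun i =>
  if 1 ≤ i ∧ i ≤ p then 1
  else if p + 1 ≤ i ∧ i ≤ p + m + 1 then Nat.choose m (i - p - 1)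
  else 0

/-- The convolution `r_i = ∑_{j=1}^{i} s_j * t_{i+1-j}` of the two broom sequences. -/
def convSeq (m n p q : ℕ) : ℕ → ℕ := fun i =>
  ∑ j ∈ Finset.Icc 1 i, broomSeq m p j * broomSeq n q (i + 1 - j)

/-- A sequence (indexed from 1) is unimodal if for some `k ≥ 1` it is
nondecreasing up to `k` and nonincreasing from `k` on. -/
def Unimodal (a : ℕ → ℕ) : Prop :=
  ∃ k : ℕ, 1 ≤ k ∧ (∀ i, 1 ≤ i → i < k → a i ≤ a (i + 1)) ∧ (∀ i, k ≤ i → a (i + 1) ≤ a i)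

/-!
Write `i = p + q + 1 + k`. Splitting the convolution according to which factor is inside
its block of ones gives `r_i = ∑_{j<p} C(n, k+1+j) + C(m+n, k) + ∑_{j<q} C(m, k+1+j)`,
the middle term by Vandermonde's identity. Once `k ≥ ⌊(m+n)/2⌋` every lower index is past
the middle of its row of Pascal's triangle, where binomial coefficients decrease, so each
term decreases from `i` to `i + 1`.
-/

open Finset

theorem Nat.choose_succ_le_of_half_le {n r : ℕ} (h : n / 2 ≤ r) :
    n.choose (r + 1) ≤ n.choose r := by
  refine Nat.le_of_mul_le_mul_right ?_ r.succ_pos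
  rw [Nat.choose_succ_right_eq]
  exact Nat.mul_le_mul_left _ (by omega)

lemma broomSeq_eq_one {m p i : ℕ} (h₁ : 1 ≤ i) (h₂ : i ≤ p) : broomSeq m p i = 1 := by
  simp [broomSeq, h₁, h₂]

lemma broomSeq_add (m p j : ℕ) : broomSeq m p (p + 1 + j) = m.choose j := by
  unfold broomSeq
  rw [if_neg (by omega)]
  split_ifs with h
  · congr 1; omega
  · exact (Nat.choose_eq_zero_of_lt (by omega)).symm

lemma convSeq_eq_sum_range (m n p q i : ℕ) :
    convSeq m n p q i = ∑ j ∈ range i, broomSeq m p (j + 1) * broomSeq n q (i - j) := by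
  rw [convSeq, ← Ico_add_one_right_eq_Icc, sum_Ico_eq_sum_range, Nat.add_sub_cancel]
  refine sum_congr rfl fun j _ => ?_
  rw [add_comm 1 j]
  congr 2
  omega

lemma convSeq_add (m n p q k : ℕ) :
    convSeq m n p q (p + q + 1 + k) =
      ∑ j ∈ range p, n.choose (k + 1 + j) + (m + n).choose k +
        ∑ j ∈ range q, m.choose (k + 1 + j) := by
  rw [convSeq_eq_sum_range, show p + q + 1 + k = p + (k + 1) + q by omega,
    sum_range_add, sum_range_add]
  congr 1
  · congr 1
    · rw [← sum_range_reflect]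
      refine sum_congr rfl fun j hj => ?_
      have hj : j < p := mem_range.1 hj
      rw [broomSeq_eq_one (by omega) (by omega), one_mul,
        show p + (k + 1) + q - (p - 1 - j) = q + 1 + (k + 1 + j) by omega, broomSeq_add]
    · rw [Nat.add_choose_eq,
        Nat.sum_antidiagonal_eq_sum_range_succ (fun a b => m.choose a * n.choose b)]
      refine sum_congr rfl fun j hj => ?_
      have hj : j < k + 1 := mem_range.1 hj
      rw [show p + j + 1 = p + 1 + j by omega, broomSeq_add,
        show p + (k + 1) + q - (p + j) = q + 1 + (k - j) by omega, broomSeq_add]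
  · refine sum_congr rfl fun j hj => ?_
    have hj : j < q := mem_range.1 hj
    rw [show p + (k + 1) + j + 1 = p + 1 + (k + 1 + j) by omega, broomSeq_add,
      broomSeq_eq_one (by omega) (by omega), mul_one]

theorem convSeq_decreasing_tail_general (m n p q : ℕ) :
    ∀ i, p + q + 1 + (m + n) / 2 ≤ i → convSeq m n p q (i + 1) ≤ convSeq m n p q i := by
  intro i hi
  obtain ⟨k, rfl, hk⟩ : ∃ k, i = p + q + 1 + k ∧ (m + n) / 2 ≤ k :=
    ⟨i - (p + q + 1), by omega, by omega⟩
  rw [add_assoc, convSeq_add, convSeq_add]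
  gcongr with j _ j _
  · rw [show k + 1 + 1 + j = k + 1 + j + 1 by omega]
    exact Nat.choose_succ_le_of_half_le (by omega)
  · exact Nat.choose_succ_le_of_half_le hk
  · rw [show k + 1 + 1 + j = k + 1 + j + 1 by omega]
    exact Nat.choose_succ_le_of_half_le (by omega)

theorem convSeq_decreasing_tail (m n p q : ℕ)
    (hm : 1 ≤ m) (hn : 1 ≤ n) (hp : 1 ≤ p) (hq : 1 ≤ q) :
    ∀ i, p + q + 1 + (m + n) / 2 ≤ i → convSeq m n p q (i + 1) ≤ convSeq m n p q i :=
  convSeq_decreasing_tail_general m n p q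
end

section
/- For integers p, q ≥ 1, if m = 2 and n = 2 then the convolution sequence (r_i)_{i≥1} is unimodal. -/
/-- Explicit values of `broomSeq 2 p`. -/
def sval (p v : ℕ) : ℕ :=
  if v = 0 then 0 else if v ≤ p + 1 then 1 else if v = p + 2 then 2
  else if v = p + 3 then 1 else 0

lemma sval_cases (p v : ℕ) :
    (v = 0 ∧ sval p v = 0) ∨ (1 ≤ v ∧ v ≤ p + 1 ∧ sval p v = 1) ∨
    (v = p + 2 ∧ sval p v = 2) ∨ (v = p + 3 ∧ sval p v = 1) ∨
    (p + 4 ≤ v ∧ sval p v = 0) := by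
  unfold sval
  split_ifs <;> omega

lemma broom_eval (p : ℕ) (hp : 1 ≤ p) (v : ℕ) : broomSeq 2 p v = sval p v := by
  unfold broomSeq sval
  rcases (by omega : v = 0 ∨ (1 ≤ v ∧ v ≤ p) ∨ v = p + 1 ∨ v = p + 2 ∨ v = p + 3 ∨ p + 4 ≤ v)
    with h | h | h | h | h | h
  · subst h; rw [if_neg (by omega), if_neg (by omega), if_pos rfl]
  · rw [if_pos h, if_neg (by omega), if_pos (by omega)]
  · subst h
    rw [if_neg (by omega), if_pos (by omega), if_neg (by omega), if_pos (by omega)]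
    have h2 : p + 1 - p - 1 = 0 := by omega
    rw [h2]
    decide
  · subst h
    rw [if_neg (by omega), if_pos (by omega), if_neg (by omega), if_neg (by omega),
      if_pos rfl]
    have h2 : p + 2 - p - 1 = 1 := by omega
    rw [h2]
    decide
  · subst h
    rw [if_neg (by omega), if_pos (by omega), if_neg (by omega), if_neg (by omega),
      if_neg (by omega), if_pos rfl]
    have h2 : p + 3 - p - 1 = 2 := by omega
    rw [h2]
    decide
  · rw [if_neg (by omega), if_neg (by omega), if_neg (by omega), if_neg (by omega),
      if_neg (by omega), if_neg (by omega)]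

lemma broom_zero (p : ℕ) : broomSeq 2 p 0 = 0 := by simp [broomSeq]

lemma tstep (q : ℕ) (hq : 1 ≤ q) (u : ℕ) (hu : 1 ≤ u) :
    broomSeq 2 q (u + 1) + ((if u = q + 2 then 1 else 0) + (if u = q + 3 then 1 else 0)) =
      broomSeq 2 q u + (if u = q + 1 then 1 else 0) := by
  rw [broom_eval q hq, broom_eval q hq]
  have h1 := sval_cases q (u + 1)
  have h2 := sval_cases q u
  split_ifs <;> omega

lemma ind_sum (p i c : ℕ) :
    (∑ j ∈ Finset.Icc 1 i, broomSeq 2 p j * (if j + c = i then 1 else 0)) =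
      broomSeq 2 p (i - c) := by
  by_cases h : c < i
  · have h2 : ∀ j ∈ Finset.Icc 1 i,
        broomSeq 2 p j * (if j + c = i then 1 else 0) =
          if j = i - c then broomSeq 2 p j else 0 := by
      intro j hj
      rw [Finset.mem_Icc] at hj
      by_cases hij : j + c = i
      · rw [if_pos hij, if_pos (by omega), mul_one]
      · rw [if_neg hij, if_neg (by omega), mul_zero]
    rw [Finset.sum_congr rfl h2, Finset.sum_ite_eq' (Finset.Icc 1 i) (i - c)]
    rw [if_pos (Finset.mem_Icc.mpr ⟨by omega, by omega⟩)]
  · have h0 : i - c = 0 := by omega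
    rw [h0, broom_zero]
    have h2 : ∀ j ∈ Finset.Icc 1 i,
        broomSeq 2 p j * (if j + c = i then 1 else 0) = 0 := by
      intro j hj
      rw [Finset.mem_Icc] at hj
      rw [if_neg (by omega), mul_zero]
    rw [Finset.sum_congr rfl h2, Finset.sum_const_zero]

lemma conv_diff (p q : ℕ) (hp : 1 ≤ p) (hq : 1 ≤ q) (i : ℕ) :
    convSeq 2 2 p q (i + 1) + broomSeq 2 p (i - (q + 1)) + broomSeq 2 p (i - (q + 2)) =
      convSeq 2 2 p q i + broomSeq 2 p (i + 1) + broomSeq 2 p (i - q) := by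
  unfold convSeq
  rw [Finset.sum_Icc_succ_top (Nat.le_add_left 1 i)]
  have ht1 : broomSeq 2 q (i + 1 + 1 - (i + 1)) = 1 := by
    have : i + 1 + 1 - (i + 1) = 1 := by omega
    rw [this, broom_eval q hq]
    unfold sval
    rw [if_neg (by omega), if_pos (by omega)]
  rw [ht1, mul_one]
  have key : ∀ j ∈ Finset.Icc 1 i,
      broomSeq 2 p j * broomSeq 2 q (i + 1 + 1 - j) +
        (broomSeq 2 p j * (if j + (q + 1) = i then 1 else 0) +
          broomSeq 2 p j * (if j + (q + 2) = i then 1 else 0)) =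
      broomSeq 2 p j * broomSeq 2 q (i + 1 - j) +
        broomSeq 2 p j * (if j + q = i then 1 else 0) := by
    intro j hj
    rw [Finset.mem_Icc] at hj
    have h2 : i + 1 + 1 - j = (i + 1 - j) + 1 := by omega
    have e1 : (if j + (q + 1) = i then (1:ℕ) else 0) =
        (if i + 1 - j = q + 2 then 1 else 0) := if_congr (by omega) rfl rfl
    have e2 : (if j + (q + 2) = i then (1:ℕ) else 0) =
        (if i + 1 - j = q + 3 then 1 else 0) := if_congr (by omega) rfl rfl
    have e3 : (if j + q = i then (1:ℕ) else 0) =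
        (if i + 1 - j = q + 1 then 1 else 0) := if_congr (by omega) rfl rfl
    rw [h2, e1, e2, e3, ← Nat.mul_add, ← Nat.mul_add, ← Nat.mul_add]
    exact congrArg (fun x => broomSeq 2 p j * x) (tstep q hq (i + 1 - j) (by omega))
  have sums := Finset.sum_congr rfl key
  simp only [Finset.sum_add_distrib] at sums
  rw [ind_sum p i (q + 1), ind_sum p i (q + 2), ind_sum p i q] at sums
  omega

lemma incr_ineq (p q i : ℕ) (hp : 1 ≤ p) (hq : 1 ≤ q) (hi : 1 ≤ i)
    (hik : i < p + 3 ∨ i < q + 3) :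
    sval p (i - (q + 1)) + sval p (i - (q + 2)) ≤ sval p (i + 1) + sval p (i - q) := by
  have h1 := sval_cases p (i - (q + 1))
  have h2 := sval_cases p (i - (q + 2))
  have h3 := sval_cases p (i + 1)
  have h4 := sval_cases p (i - q)
  omega

lemma decr_ineq (p q i : ℕ) (hp : 1 ≤ p) (hq : 1 ≤ q)
    (h1 : p + 3 ≤ i) (h2 : q + 3 ≤ i) :
    sval p (i + 1) + sval p (i - q) ≤ sval p (i - (q + 1)) + sval p (i - (q + 2)) := by
  have h3 := sval_cases p (i - (q + 1))
  have h4 := sval_cases p (i - (q + 2))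
  have h5 := sval_cases p (i + 1)
  have h6 := sval_cases p (i - q)
  omega


theorem convSeq_unimodal_of_m_and_n_eq_two (p q : ℕ) (hp : 1 ≤ p) (hq : 1 ≤ q) :
    Unimodal (convSeq 2 2 p q) := by
  refine ⟨max p q + 3, by omega, ?_, ?_⟩
  · intro i hi1 hik
    have hd := conv_diff p q hp hq i
    rw [broom_eval p hp, broom_eval p hp, broom_eval p hp, broom_eval p hp] at hd
    have hik' : i < p + 3 ∨ i < q + 3 := by
      rcases Nat.le_total p q with h | h
      · right; rw [Nat.max_eq_right h] at hik; omega
      · left; rw [Nat.max_eq_left h] at hik; omega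
    have := incr_ineq p q i hp hq hi1 hik'
    omega
  · intro i hik
    have hd := conv_diff p q hp hq i
    rw [broom_eval p hp, broom_eval p hp, broom_eval p hp, broom_eval p hp] at hd
    have h1 : p + 3 ≤ i := le_trans (by omega : p + 3 ≤ max p q + 3) hik
    have h2 : q + 3 ≤ i := le_trans (by omega : q + 3 ≤ max p q + 3) hik
    have := decr_ineq p q i hp hq h1 h2
    omega
end
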